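/- Let G be a finite connected simple graph with vertex set V and Laplacian matrix L, let D : V → ℤ be a divisor of degree zero, let n be a positive integer, and let r : V → ℤ be an integer vector with L·r = n·D. If for every integer t the greatest common divisor of the integers {r(v) + t : v ∈ V} equals 1, then the class of D in the critical group K(G) has additive order exactly n. -/

import Mathlib

/-! If `m • [D] = 0` then `L x = m D` for some `x`, so `L (m r - n x) = 0`; on a connected graph
the kernel of `L` consists of constant vectors, hence `n ∣ m (r v - r v₀)` for all `v`. The
hypothesis at `t = -r v₀` says the differences `r v - r v₀` have gcd `1`, so `n ∣ m`.
Conversely `L r = n D` gives `n • [D] = 0`. -/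

/-- The degree homomorphism on divisors. -/
def degHom (V : Type*) [Fintype V] : (V → ℤ) →+ ℤ where
  toFun D := ∑ v, D v
  map_zero' := by simp
  map_add' x y := by simp [Finset.sum_add_distrib]

/-- The group `Div⁰` of degree-zero divisors. -/
def Div0 (V : Type*) [Fintype V] : AddSubgroup (V → ℤ) := (degHom V).ker

/-- The group of principal divisors: the image of the Laplacian `L = Deg - A`. -/
def Prin {V : Type*} [Fintype V] [DecidableEq V] (G : SimpleGraph V) [DecidableRel G.Adj] :
    AddSubgroup (V → ℤ) :=
  AddMonoidHom.range (Matrix.mulVecLin (G.lapMatrix ℤ)).toAddMonoidHom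

/-- The critical group `K(G) = Div⁰(G) / Prin(G)`. -/
def CriticalGroup {V : Type*} [Fintype V] [DecidableEq V] (G : SimpleGraph V)
    [DecidableRel G.Adj] : Type _ :=
  Div0 V ⧸ ((Prin G).addSubgroupOf (Div0 V))

noncomputable instance {V : Type*} [Fintype V] [DecidableEq V] (G : SimpleGraph V)
    [DecidableRel G.Adj] : AddCommGroup (CriticalGroup G) :=
  inferInstanceAs (AddCommGroup (Div0 V ⧸ ((Prin G).addSubgroupOf (Div0 V))))

/-- The class of a degree-zero divisor in the critical group. -/
def divisorClass {V : Type*} [Fintype V] [DecidableEq V] (G : SimpleGraph V)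
    [DecidableRel G.Adj] (D : V → ℤ) (hD : D ∈ Div0 V) : CriticalGroup G :=
  (QuotientAddGroup.mk (⟨D, hD⟩ : Div0 V) :
    Div0 V ⧸ ((Prin G).addSubgroupOf (Div0 V)))

/-- The divisor with value `1` at `x`, `-1` at `y` (for `x ≠ y`) and `0` elsewhere. -/
def pointDiff {V : Type*} [DecidableEq V] (x y : V) : V → ℤ :=
  fun z => (if z = x then 1 else 0) - (if z = y then 1 else 0)

lemma pointDiff_mem {V : Type*} [Fintype V] [DecidableEq V] (x y : V) :
    pointDiff x y ∈ Div0 V := by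
  simp [Div0, AddMonoidHom.mem_ker, degHom, pointDiff, Finset.sum_sub_distrib]

theorem Finset.dvd_of_forall_dvd_mul_of_gcd_eq_one {ι α : Type*} [CommMonoidWithZero α]
    [StrongNormalizedGCDMonoid α] {s : Finset ι} {f : ι → α} (hf : s.gcd f = 1) {a b : α}
    (h : ∀ i ∈ s, a ∣ b * f i) : a ∣ b := by
  have := Finset.dvd_gcd h
  rwa [Finset.gcd_mul_left, hf, mul_one, dvd_normalize_iff] at this

open scoped Matrix

namespace SimpleGraph

variable {V : Type*} [Fintype V] [DecidableEq V] (G : SimpleGraph V) [DecidableRel G.Adj]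

theorem lapMatrix_int_mulVec_eq_zero_iff_forall_reachable {x : V → ℤ} :
    G.lapMatrix ℤ *ᵥ x = 0 ↔ ∀ i j : V, G.Reachable i j → x i = x j := by
  have hcast : G.lapMatrix ℤ *ᵥ x = 0 ↔ G.lapMatrix ℝ *ᵥ (fun v => (x v : ℝ)) = 0 := by
    simp only [funext_iff, lapMatrix_mulVec_apply, Pi.zero_apply]
    refine forall_congr' fun v => ?_
    exact_mod_cast Iff.rfl
  simp only [hcast, lapMatrix_mulVec_eq_zero_iff_forall_reachable, Int.cast_inj]

theorem mul_sub_eq_of_lapMatrix_mulVec_eq_smul (hG : G.Connected) {D x y : V → ℤ} {a b : ℤ}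
    (hx : G.lapMatrix ℤ *ᵥ x = a • D) (hy : G.lapMatrix ℤ *ᵥ y = b • D) (v w : V) :
    b * (x v - x w) = a * (y v - y w) := by
  have hker : G.lapMatrix ℤ *ᵥ (b • x - a • y) = 0 := by
    rw [Matrix.mulVec_sub, Matrix.mulVec_smul, Matrix.mulVec_smul, hx, hy, smul_smul, smul_smul,
      mul_comm, sub_self]
  have := (G.lapMatrix_int_mulVec_eq_zero_iff_forall_reachable.1 hker) v w (hG.preconnected v w)
  simp only [Pi.sub_apply, Pi.smul_apply, smul_eq_mul] at this
  linear_combination this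

end SimpleGraph

theorem nsmul_divisorClass_eq_zero_iff {V : Type*} [Fintype V] [DecidableEq V]
    (G : SimpleGraph V) [DecidableRel G.Adj] (D : V → ℤ) (hD : D ∈ Div0 V) (m : ℕ) :
    m • divisorClass G D hD = 0 ↔ ∃ x : V → ℤ, G.lapMatrix ℤ *ᵥ x = (m : ℤ) • D := by
  change (QuotientAddGroup.mk (m • (⟨D, hD⟩ : Div0 V)) :
    Div0 V ⧸ (Prin G).addSubgroupOf (Div0 V)) = 0 ↔ _
  rw [QuotientAddGroup.eq_zero_iff, AddSubgroup.mem_addSubgroupOf]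
  simp [Prin]

theorem addOrderOf_divisorClass_of_gcd_eq_one_general {V : Type*} [Fintype V] [DecidableEq V]
    (G : SimpleGraph V) [DecidableRel G.Adj] (hG : G.Connected)
    (D : V → ℤ) (hD : D ∈ Div0 V) (n : ℕ) (r : V → ℤ)
    (hr : (G.lapMatrix ℤ).mulVec r = (n : ℤ) • D)
    (hgcd : ∀ t : ℤ, Finset.univ.gcd (fun v => r v + t) = 1) :
    addOrderOf (divisorClass G D hD) = n := by
  refine Nat.dvd_antisymm (addOrderOf_dvd_of_nsmul_eq_zero
    ((nsmul_divisorClass_eq_zero_iff G D hD n).2 ⟨r, hr⟩)) ?_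
  obtain ⟨x, hx⟩ := (nsmul_divisorClass_eq_zero_iff G D hD _).1 (addOrderOf_nsmul_eq_zero _)
  obtain ⟨v₀⟩ := hG.nonempty
  have hdiff : Finset.univ.gcd (fun v => r v - r v₀) = 1 := by
    simpa only [sub_eq_add_neg] using hgcd (-r v₀)
  have : (n : ℤ) ∣ addOrderOf (divisorClass G D hD) :=
    Finset.dvd_of_forall_dvd_mul_of_gcd_eq_one hdiff fun v _ =>
      ⟨x v - x v₀, G.mul_sub_eq_of_lapMatrix_mulVec_eq_smul hG hr hx v v₀⟩
  exact_mod_cast this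

/-- Let `G` be a finite connected simple graph with Laplacian `L`, let `D`
be a degree-zero divisor, let `n > 0`, and let `r` be an integer vector with `L·r = n·D`.
If for every integer `t` the gcd of the integers `{r v + t : v ∈ V}` equals `1`, then the
class of `D` in the critical group `K(G)` has additive order exactly `n`. -/
theorem addOrderOf_divisorClass_of_gcd_eq_one {V : Type*} [Fintype V] [DecidableEq V]
    (G : SimpleGraph V) [DecidableRel G.Adj] (hG : G.Connected)
    (D : V → ℤ) (hD : D ∈ Div0 V) (n : ℕ) (hn : 0 < n) (r : V → ℤ)
    (hr : (G.lapMatrix ℤ).mulVec r = (n : ℤ) • D)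
    (hgcd : ∀ t : ℤ, Finset.univ.gcd (fun v => r v + t) = 1) :
    addOrderOf (divisorClass G D hD) = n :=
  addOrderOf_divisorClass_of_gcd_eq_one_general G hG D hD n r hr hgcd
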